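/- Let n ≥ 2, r0 > 0, 0 < β < 1, and C1 ≥ 0. Let u ∈ C²((r0,∞)) satisfy |u''(r) + (n−1)·β·r^{β−1}·u'(r)| ≤ C1 |u(r)| for all r > r0. If for every τ > 0 there is a constant C_τ such that |u(r)| ≤ C_τ e^{−τ r^{(4−β)/3}} for all r > r0, then u ≡ 0 on (r0+1, ∞). -/

import Mathlib

open Filter Real Set Topology

/-!
Along a solution of `|u'' + c u'| ≤ C₁ |u|` with `c` bounded above, the energy
`E = u² + u'²` satisfies `E' ≥ -K E`, so `E(t) e^{K t}` is nondecreasing. By the mean value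
theorem, every interval `[s, s + 1]` contains a point where `E ≤ 5 sup_{[s,s+1]} u²`, since there
`u' = u(s + 1) - u(s)`. Under the decay hypothesis this bound is `O(e^{-2τ s^p})` with
`p = (4 - β)/3 > 1`. This beats the exponential weight `e^{K s}`, so
`E(r) e^{K r} ≤ 0` at every `r`.
-/

noncomputable def energy (u : ℝ → ℝ) (t : ℝ) : ℝ := u t ^ 2 + deriv u t ^ 2

lemma energy_nonneg (u : ℝ → ℝ) (t : ℝ) : 0 ≤ energy u t := by
  unfold energy; positivity

lemma hasDerivAt_energy {u : ℝ → ℝ} {x : ℝ} (hu : DifferentiableAt ℝ u x)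
    (hu' : DifferentiableAt ℝ (deriv u) x) :
    HasDerivAt (energy u) (2 * u x * deriv u x + 2 * deriv u x * deriv (deriv u) x) x := by
  have h := (hu.hasDerivAt.fun_pow 2).fun_add (hu'.hasDerivAt.fun_pow 2)
  exact h.congr_deriv (by norm_num)

lemma neg_mul_le_energy_deriv {a b d c A C : ℝ} (hC : 0 ≤ C) (hA : 0 ≤ A) (hcA : c ≤ A)
    (h : |d + c * b| ≤ C * |a|) :
    -((1 + C + 2 * A) * (a ^ 2 + b ^ 2)) ≤ 2 * a * b + 2 * b * d := by
  have hbd : -(|b| * (C * |a|)) ≤ b * (d + c * b) := by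
    calc -(|b| * (C * |a|)) ≤ -|b * (d + c * b)| := by
          rw [abs_mul]; exact neg_le_neg (mul_le_mul_of_nonneg_left h (abs_nonneg b))
      _ ≤ _ := neg_abs_le _
  -- `2 b d = 2 b (d + c b) - 2 c b²`, and `2 |a b| ≤ a² + b²` bounds the remaining cross terms.
  nlinarith [mul_nonneg hC (sq_nonneg (|a| - |b|)), mul_nonneg (sub_nonneg.2 hcA) (sq_nonneg b),
    mul_nonneg hA (sq_nonneg a), sq_nonneg (a + b), sq_abs a, sq_abs b]

theorem monotoneOn_energy_mul_exp {u c : ℝ → ℝ} {a A C : ℝ}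
    (hu : ContDiffOn ℝ 2 u (Ioi a)) (hC : 0 ≤ C) (hA : 0 ≤ A)
    (hcA : ∀ x ∈ Ioi a, c x ≤ A)
    (hineq : ∀ x ∈ Ioi a, |deriv (deriv u) x + c x * deriv u x| ≤ C * |u x|) :
    MonotoneOn (fun t => energy u t * exp ((1 + C + 2 * A) * t)) (Ioi a) := by
  set K := 1 + C + 2 * A
  have hd : ∀ x ∈ Ioi a, HasDerivAt (fun t => energy u t * exp (K * t))
      ((2 * u x * deriv u x + 2 * deriv u x * deriv (deriv u) x + K * energy u x) *
        exp (K * x)) x := by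
    intro x hx
    have hnhds := isOpen_Ioi.mem_nhds hx
    have hu₁ := (hu.differentiableOn (by norm_num) x hx).differentiableAt hnhds
    have hu' : ContDiffOn ℝ 1 (deriv u) (Ioi a) := hu.deriv_of_isOpen isOpen_Ioi (by norm_num)
    have hu₂ := (hu'.differentiableOn one_ne_zero x hx).differentiableAt hnhds
    have hexp := ((hasDerivAt_id' x).const_mul K).exp
    exact ((hasDerivAt_energy hu₁ hu₂).fun_mul hexp).congr_deriv (by ring)
  refine monotoneOn_of_deriv_nonneg (convex_Ioi a)
    (fun x hx => (hd x hx).continuousAt.continuousWithinAt)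
    (fun x hx => (hd x (interior_subset hx)).differentiableAt.differentiableWithinAt)
    (fun x hx => ?_)
  rw [interior_Ioi] at hx
  rw [(hd x hx).deriv]
  have h := neg_mul_le_energy_deriv hC hA (hcA x hx) (hineq x hx)
  exact mul_nonneg (by unfold energy; linarith) (exp_pos _).le

lemma exists_energy_le_of_abs_le {u : ℝ → ℝ} {s D : ℝ}
    (hu : DifferentiableOn ℝ u (Icc s (s + 1))) (hD : ∀ t ∈ Icc s (s + 1), |u t| ≤ D) :
    ∃ ξ ∈ Ioo s (s + 1), energy u ξ ≤ 5 * D ^ 2 := by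
  obtain ⟨ξ, hξ, hslope⟩ := exists_deriv_eq_slope u (lt_add_one s) hu.continuousOn
    (hu.mono Ioo_subset_Icc_self)
  have hs : s ∈ Icc s (s + 1) := left_mem_Icc.2 (by linarith)
  have hs₁ : s + 1 ∈ Icc s (s + 1) := right_mem_Icc.2 (by linarith)
  have hD₀ : 0 ≤ D := (abs_nonneg _).trans (hD s hs)
  have hξD := hD ξ (Ioo_subset_Icc_self hξ)
  have hslopeD : |u (s + 1) - u s| ≤ 2 * D := by
    linarith [abs_sub (u (s + 1)) (u s), hD s hs, hD _ hs₁]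
  refine ⟨ξ, hξ, ?_⟩
  rw [energy, hslope, add_sub_cancel_left, div_one]
  nlinarith [sq_le_sq' (abs_le.1 hξD).1 (abs_le.1 hξD).2,
    sq_le_sq' (abs_le.1 hslopeD).1 (abs_le.1 hslopeD).2]

lemma tendsto_mul_add_sub_mul_rpow_atBot {p b : ℝ} (hp : 1 < p) (hb : 0 < b) (K L : ℝ) :
    Tendsto (fun s => K * s + L - b * s ^ p) atTop atBot := by
  have hgrow : Tendsto (fun s => s * (b * s ^ (p - 1) - K) - L) atTop atTop :=
    tendsto_atTop_add_const_right _ _ (tendsto_id.atTop_mul_atTop₀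
      (tendsto_atTop_add_const_right _ _
        ((tendsto_rpow_atTop (by linarith)).const_mul_atTop hb)))
  refine tendsto_neg_atTop_iff.1 (hgrow.congr' ?_)
  filter_upwards [eventually_gt_atTop 0] with s hs
  rw [show p = 1 + (p - 1) by ring, rpow_add hs, rpow_one]
  ring_nf

theorem eqOn_zero_of_monotoneOn_energy_mul_exp {u : ℝ → ℝ} {a K C τ p : ℝ}
    (hu : DifferentiableOn ℝ u (Ioi a))
    (hmono : MonotoneOn (fun t => energy u t * exp (K * t)) (Ioi a)) (hK : 0 ≤ K) (hτ : 0 < τ)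
    (hp : 1 < p)
    (hdecay : ∀ t ∈ Ioi a, |u t| ≤ C * exp (-τ * t ^ p)) :
    EqOn u 0 (Ioi a) := by
  intro r hr
  have hC : 0 ≤ C := nonneg_of_mul_nonneg_left ((abs_nonneg _).trans (hdecay r hr)) (exp_pos _)
  have hbound : ∀ s, max r 0 < s →
      energy u r * exp (K * r) ≤ 5 * C ^ 2 * exp (K * s + K - 2 * τ * s ^ p) := by
    intro s hs
    rw [max_lt_iff] at hs
    have hsub : Icc s (s + 1) ⊆ Ioi a := fun t ht => (mem_Ioi.1 hr).trans_le (hs.1.le.trans ht.1)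
    have hD : ∀ t ∈ Icc s (s + 1), |u t| ≤ C * exp (-τ * s ^ p) := fun t ht =>
      (hdecay t (hsub ht)).trans <| mul_le_mul_of_nonneg_left (exp_le_exp.2 <|
        by nlinarith [rpow_le_rpow hs.2.le ht.1 (by linarith : 0 ≤ p)]) hC
    obtain ⟨ξ, hξ, hEξ⟩ := exists_energy_le_of_abs_le (hu.mono hsub) hD
    calc energy u r * exp (K * r) ≤ energy u ξ * exp (K * ξ) :=
          hmono hr (hsub (Ioo_subset_Icc_self hξ)) (hs.1.trans hξ.1).le
      _ ≤ 5 * (C * exp (-τ * s ^ p)) ^ 2 * exp (K * (s + 1)) := by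
          gcongr
          exact hξ.2.le
      _ = 5 * C ^ 2 * exp (K * s + K - 2 * τ * s ^ p) := by
          rw [mul_pow, ← exp_nat_mul, mul_assoc, mul_assoc, ← exp_add]
          ring_nf
  have hlim : Tendsto (fun s => 5 * C ^ 2 * exp (K * s + K - 2 * τ * s ^ p)) atTop (𝓝 0) := by
    have h := tendsto_exp_atBot.comp
      (tendsto_mul_add_sub_mul_rpow_atBot (b := 2 * τ) hp (by positivity) K K)
    simpa using h.const_mul (5 * C ^ 2)
  have hE : energy u r * exp (K * r) ≤ 0 :=
    ge_of_tendsto hlim ((eventually_gt_atTop _).mono hbound)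
  have hEr : energy u r = 0 :=
    le_antisymm (nonpos_of_mul_nonpos_left hE (exp_pos _)) (energy_nonneg u r)
  unfold energy at hEr
  simpa using (add_eq_zero_iff_of_nonneg (sq_nonneg _) (sq_nonneg _)).1 hEr |>.1

lemma mul_rpow_le_abs_mul_rpow_of_nonpos {c x₀ x γ : ℝ} (hx₀ : 0 < x₀) (hx : x₀ ≤ x)
    (hγ : γ ≤ 0) : c * x ^ γ ≤ |c| * x₀ ^ γ :=
  calc c * x ^ γ ≤ |c| * x ^ γ :=
        mul_le_mul_of_nonneg_right (le_abs_self c) (rpow_nonneg (hx₀.le.trans hx) γ)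
    _ ≤ |c| * x₀ ^ γ :=
        mul_le_mul_of_nonneg_left (rpow_le_rpow_of_nonpos hx₀ hx hγ) (abs_nonneg c)

theorem stmt_12_general
    (n : ℕ) (r0 : ℝ) (hr0 : 0 < r0)
    (β : ℝ) (hβ1 : β < 1) (C1 : ℝ) (hC1 : 0 ≤ C1)
    (u : ℝ → ℝ) (hu : ContDiffOn ℝ 2 u (Ioi r0))
    (hineq : ∀ r ∈ Ioi r0,
      |deriv (deriv u) r + ((n : ℝ) - 1) * β * r ^ (β - 1) * deriv u r| ≤ C1 * |u r|)
    (hdecay : ∀ τ > (0 : ℝ), ∃ Cτ : ℝ, ∀ r ∈ Ioi r0,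
      |u r| ≤ Cτ * Real.exp (-τ * r ^ ((4 - β) / 3))) :
    ∀ r, r0 + 1 < r → u r = 0 := by
  have hmono := monotoneOn_energy_mul_exp (c := fun x => ((n : ℝ) - 1) * β * x ^ (β - 1))
    (A := |((n : ℝ) - 1) * β| * r0 ^ (β - 1)) hu hC1 (by positivity)
    (fun x hx => mul_rpow_le_abs_mul_rpow_of_nonpos hr0 (mem_Ioi.1 hx).le (by linarith)) hineq
  obtain ⟨C, hC⟩ := hdecay 1 one_pos
  have hzero := eqOn_zero_of_monotoneOn_energy_mul_exp (hu.differentiableOn two_ne_zero) hmono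
    (by positivity) one_pos (by linarith : 1 < (4 - β) / 3) hC
  exact fun r hr => hzero (by simp only [mem_Ioi]; linarith)

/-- The one-dimensional (radial) case of Corollary 6.4 a) of the paper, on warped
cylindrical ends with warping function σ(r) = e^{r^β}, 0 < β < 1: the radial Laplacian
is L u = u'' + (n−1)·β·r^{β−1}·u'. -/
theorem stmt_12
    (n : ℕ) (hn : 2 ≤ n) (r0 : ℝ) (hr0 : 0 < r0)
    (β : ℝ) (hβ0 : 0 < β) (hβ1 : β < 1) (C1 : ℝ) (hC1 : 0 ≤ C1)
    (u : ℝ → ℝ) (hu : ContDiffOn ℝ 2 u (Ioi r0))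
    (hineq : ∀ r ∈ Ioi r0,
      |deriv (deriv u) r + ((n : ℝ) - 1) * β * r ^ (β - 1) * deriv u r| ≤ C1 * |u r|)
    (hdecay : ∀ τ > (0 : ℝ), ∃ Cτ : ℝ, ∀ r ∈ Ioi r0,
      |u r| ≤ Cτ * Real.exp (-τ * r ^ ((4 - β) / 3))) :
    ∀ r, r0 + 1 < r → u r = 0 :=
  stmt_12_general n r0 hr0 β hβ1 C1 hC1 u hu hineq hdecay
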